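/- Let f be a perfect k-coloring of the graph D(m,n) (which for m=0 is the Hamming graph H(n,4)) with quotient matrix S, let λ_0 > λ_1 > … > λ_l be the distinct eigenvalues of S, and let i be any color. Then there exists a unique tuple of real numbers (a_1,…,a_l) such that for every t = 0,1,…,l−1: Σ_{j=1}^{l} λ_j^t · a_j = |f^{-1}(i)| · (S^t)_{i,i} − (|f^{-1}(i)|² / 4^{2m+n}) · λ_0^t (where (S^0)_{i,i} = 1); moreover, for every j = 1,…,l the number 4^{2m+n} · a_j is a non-negative integer. -/

import Mathlib

/-- The Hamming graph `H(n,q)`: vertices are `Fin n → ZMod q`, two vertices are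
adjacent iff their Hamming distance is `1`. -/
def hammingGraph (n q : ℕ) : SimpleGraph (Fin n → ZMod q) where
  Adj x y := hammingDist x y = 1
  symm := by constructor; intro x y h; rwa [hammingDist_comm]
  loopless := by constructor; intro x h; simp [hammingDist_self] at h

/-- The distance from a vertex `x` to a code `C` in a graph `G`. -/
noncomputable def distToCode {V : Type*} (G : SimpleGraph V) (C : Set V) (x : V) : ℕ :=
  sInf {d : ℕ | ∃ c ∈ C, G.dist x c = d}

/-- The code distance of a code `C` in a graph `G`: the minimum distance between
two distinct codewords. -/
noncomputable def codeDist {V : Type*} (G : SimpleGraph V) (C : Set V) : ℕ :=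
  sInf {d : ℕ | ∃ x ∈ C, ∃ y ∈ C, x ≠ y ∧ G.dist x y = d}

/-- A code `C` is `1`-perfect if every vertex is at distance at most `1`
from exactly one codeword. -/
def IsOnePerfect {V : Type*} (G : SimpleGraph V) (C : Set V) : Prop :=
  ∀ x, ∃! c, c ∈ C ∧ G.dist x c ≤ 1

/-- Deleting the `i`-th coordinate of a tuple. -/
def deleteCoord {α : Type*} {n : ℕ} (i : Fin n) (c : Fin n → α) (j : Fin (n - 1)) : α :=
  c (Fin.cast (show n - 1 + 1 = n by have := i.pos; omega)
      ((Fin.cast (show n = n - 1 + 1 by have := i.pos; omega) i).succAbove j))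

/-- The projection (puncturing) of a code in `H(n,q)` at coordinate `i`. -/
def hammingProj {n q : ℕ} (i : Fin n) (C : Set (Fin n → ZMod q)) :
    Set (Fin (n - 1) → ZMod q) :=
  (deleteCoord i) '' C

/-- A code `C` in `H(n,q)` is extended `1`-perfect if it is nonempty, its code distance
is `4`, and its projection at some coordinate is a `1`-perfect code in `H(n-1,q)`. -/
def IsExtOnePerfectH (n q : ℕ) (C : Set (Fin n → ZMod q)) : Prop :=
  C.Nonempty ∧ codeDist (hammingGraph n q) C = 4 ∧
    ∃ i : Fin n, IsOnePerfect (hammingGraph (n - 1) q) (hammingProj i C)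

/-- A perfect coloring of `G` in `k` colors with quotient matrix `S`: a surjective map
`f` onto the colors such that every vertex of color `i` has exactly `S i j` neighbours
of color `j`. -/
def IsPerfectColoring {V : Type*} (G : SimpleGraph V) {k : ℕ} (f : V → Fin k)
    (S : Matrix (Fin k) (Fin k) ℤ) : Prop :=
  Function.Surjective f ∧
    ∀ v j, (({u | G.Adj v u ∧ f u = j} : Set V).ncard : ℤ) = S (f v) j

/-- A code `C` in `G` is completely regular with quotient matrix `S` if the distance
coloring `x ↦ d(x, C)` is a perfect coloring with quotient matrix `S`. -/
def IsCompletelyRegular {V : Type*} (G : SimpleGraph V) (C : Set V) {k : ℕ}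
    (S : Matrix (Fin k) (Fin k) ℤ) : Prop :=
  ∃ h : ∀ x, distToCode G C x < k,
    IsPerfectColoring G (fun x => (⟨distToCode G C x, h x⟩ : Fin k)) S

/-- The connecting set of the Shrikhande graph as a Cayley graph on `ℤ₄ × ℤ₄`. -/
def shrikhandeSet : Set (ZMod 4 × ZMod 4) :=
  {(0, 1), (1, 0), (0, 3), (3, 0), (1, 1), (3, 3)}

/-- The vertex set of the graph `D(m,n)`. -/
abbrev DoobV (m n : ℕ) := (Fin m → ZMod 4 × ZMod 4) × (Fin n → ZMod 4)

/-- The graph `D(m,n)`: the direct product of `m` copies of the Shrikhande graph and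
`n` copies of `K₄`. Two vertices are adjacent iff they differ in exactly one
coordinate and, if it is a Shrikhande coordinate, the difference there lies in the
connecting set. For `m > 0` it is a Doob graph; `D(0,n) = H(n,4)`. -/
def doobGraph (m n : ℕ) : SimpleGraph (DoobV m n) :=
  SimpleGraph.fromRel (fun x y =>
    (∃ i, x.1 i - y.1 i ∈ shrikhandeSet ∧ (∀ j, j ≠ i → x.1 j = y.1 j) ∧ x.2 = y.2) ∨
    (∃ i, x.2 i ≠ y.2 i ∧ (∀ j, j ≠ i → x.2 j = y.2 j) ∧ x.1 = y.1))

/-- The projection (puncturing) of a code in `D(m,n)` at the `K₄` coordinate `i`. -/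
def doobProj {m n : ℕ} (i : Fin n) (C : Set (DoobV m n)) : Set (DoobV m (n - 1)) :=
  (fun x => (x.1, deleteCoord i x.2)) '' C

/-- A code `C` in `D(m,n)`, `n ≥ 1`, is extended `1`-perfect if it is nonempty, its code
distance is `4`, and its projection at some `K₄` coordinate is a `1`-perfect code in
`D(m,n-1)`. A code `C` in `D(m,0)` is extended `1`-perfect if it is nonempty, its code
distance is `4`, and `2m = (4^l+2)/3` and `|C| = 4^(2m-l-1)` for some `l ≥ 1`. -/
def IsExtOnePerfectD (m n : ℕ) (C : Set (DoobV m n)) : Prop :=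
  C.Nonempty ∧ codeDist (doobGraph m n) C = 4 ∧
    (if n = 0 then
        ∃ l : ℕ, 0 < l ∧ 3 * (2 * m) = 4 ^ l + 2 ∧ C.ncard = 4 ^ (2 * m - l - 1)
      else ∃ i : Fin n, IsOnePerfect (doobGraph m (n - 1)) (doobProj i C))

/-!
`D(m,n)` is the Cayley graph of `G = (ℤ₄ × ℤ₄)^m × ℤ₄^n` with a symmetric connection set `C`,
so the characters `ψ` of `G` are eigenvectors of its adjacency matrix `A`, with real eigenvalues
`θ ψ = ∑_{s ∈ C} ψ s`. Expanding `Aᵗ` in characters gives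
`|G| · 1_Fᵀ Aᵗ 1_F = ∑_ψ θ(ψ)ᵗ |∑_{x ∈ F} ψ x|²` for the colour class `F = f⁻¹(i)`, while the
perfect-colouring identity `A P = P S` (`P` the colour incidence matrix) gives
`1_Fᵀ Aᵗ 1_F = |F| (Sᵗ)ᵢᵢ`. If `∑_{x ∈ F} ψ x ≠ 0` then `ψᵀ P` is a left eigenvector of `S`, so
`θ ψ` is one of the `λ_j`; since `C` generates `G`, only the trivial character has
`θ = |C| = λ₀`, and it contributes `|F|² λ₀ᵗ`. Grouping the other characters by eigenvalue gives
the solution `a_j`, unique by Vandermonde. As `G` has exponent `4`, character values are Gaussian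
integers, so `|G| a_j` is a sum of norms of Gaussian integers.
-/

open Finset Matrix

namespace Matrix

variable {ι : Type*} [Fintype ι] [DecidableEq ι]

theorem le_of_mulVec_eq_smul_of_sum_row {M : Matrix ι ι ℝ} {d : ℝ} (hM : ∀ i j, 0 ≤ M i j)
    (hrow : ∀ i, ∑ j, M i j = d) {x : ℝ} {v : ι → ℝ} (hv : v ≠ 0) (h : M *ᵥ v = x • v) :
    x ≤ d := by
  obtain ⟨i, hi⟩ := eigenvalue_mem_ball (A := M) (μ := x)
    (Module.End.hasEigenvalue_of_hasEigenvector
      ⟨Module.End.mem_eigenspace_iff.mpr (by simpa using h), hv⟩)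
  rw [Metric.mem_closedBall, Real.dist_eq] at hi
  calc x ≤ M i i + |x - M i i| := by linarith [le_abs_self (x - M i i)]
    _ ≤ M i i + ∑ j ∈ univ.erase i, ‖M i j‖ := by gcongr
    _ = d := by
      rw [← hrow i, ← add_sum_erase _ _ (mem_univ i)]
      simp [Real.norm_of_nonneg (hM i _)]

theorem exists_mulVec_eq_smul_of_vecMul_eq_smul {M : Matrix ι ι ℝ} {w : ι → ℂ} (hw : w ≠ 0)
    {θ : ℝ} (h : w ᵥ* M.map Complex.ofReal = (θ : ℂ) • w) : ∃ v ≠ 0, M *ᵥ v = θ • v := by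
  have hdetC : (M.map Complex.ofReal - (θ : ℂ) • 1).det = 0 :=
    exists_vecMul_eq_zero_iff.mp ⟨w, hw, by rw [vecMul_sub, h, vecMul_smul, vecMul_one, sub_self]⟩
  have hdet : (M - θ • 1).det = 0 := by
    apply Complex.ofReal_injective
    rw [Complex.ofReal_zero, ← hdetC, ← Complex.ofRealHom_eq_coe, RingHom.map_det]
    congr 1
    ext i j
    by_cases hij : i = j <;> simp [hij]
  obtain ⟨v, hv, hMv⟩ := exists_mulVec_eq_zero_iff.mpr hdet
  exact ⟨v, hv, by rwa [sub_mulVec, smul_mulVec, one_mulVec, sub_eq_zero] at hMv⟩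

end Matrix

theorem eq_of_forall_sum_pow_mul_eq {R : Type*} [CommRing R] [IsDomain R] {l : ℕ}
    {μ : Fin l → R} (hμ : Function.Injective μ) {a b : Fin l → R}
    (h : ∀ t < l, ∑ j, μ j ^ t * a j = ∑ j, μ j ^ t * b j) : a = b := by
  rw [← sub_eq_zero]
  refine eq_zero_of_vecMul_eq_zero (det_vandermonde_ne_zero_iff.mpr hμ) (funext fun t => ?_)
  simp only [vecMul, dotProduct, vandermonde_apply, Pi.sub_apply, Pi.zero_apply]
  simp_rw [mul_comm _ (μ _ ^ _), mul_sub, sum_sub_distrib, h t t.isLt, sub_self]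

theorem Finset.sum_comp_mul_eq_sum_fiberwise {ι R : Type*} [CommSemiring R] [DecidableEq R]
    {l : ℕ} (s : Finset ι) {g w : ι → R} {μ : Fin l → R} (hμ : Function.Injective μ)
    (h : ∀ x ∈ s, w x ≠ 0 → ∃ j, g x = μ j) (φ : R → R) :
    ∑ x ∈ s, φ (g x) * w x = ∑ j, φ (μ j) * ∑ x ∈ s with g x = μ j, w x := by
  symm
  calc ∑ j, φ (μ j) * ∑ x ∈ s with g x = μ j, w x
      = ∑ j, ∑ x ∈ s, if g x = μ j then φ (g x) * w x else 0 := by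
        refine sum_congr rfl fun j _ => ?_
        rw [mul_sum, sum_filter]
        refine sum_congr rfl fun x _ => ?_
        split_ifs with hx <;> simp [hx]
    _ = ∑ x ∈ s, ∑ j, if g x = μ j then φ (g x) * w x else 0 := sum_comm
    _ = ∑ x ∈ s, φ (g x) * w x := sum_congr rfl fun x hx => by
        by_cases hw : w x = 0
        · simp [hw]
        obtain ⟨j, hj⟩ := h x hx hw
        rw [sum_eq_single j (fun j' _ hj' => if_neg fun h' => hj' (hμ (h'.symm.trans hj)))
          (by simp), if_pos hj]

section PerfectColoring

variable {V : Type*} {Γ : SimpleGraph V} {k : ℕ} {f : V → Fin k} {S : Matrix (Fin k) (Fin k) ℤ}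

def colorMatrix (R : Type*) [Zero R] [One R] (f : V → Fin k) : Matrix V (Fin k) R :=
  Matrix.of fun x c => if f x = c then 1 else 0

namespace IsPerfectColoring

theorem nonneg (hf : IsPerfectColoring Γ f S) (c j : Fin k) : 0 ≤ S c j := by
  obtain ⟨x, rfl⟩ := hf.1 c
  rw [← hf.2 x j]
  positivity

variable [Fintype V] [DecidableRel Γ.Adj]

theorem card_neighborFinset_filter (hf : IsPerfectColoring Γ f S) (v : V) (c : Fin k) :
    (#{u ∈ Γ.neighborFinset v | f u = c} : ℤ) = S (f v) c := by
  rw [← hf.2 v c, ← Set.ncard_coe_finset]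
  congr
  ext u
  simp

theorem sum_row {d : ℕ} (hf : IsPerfectColoring Γ f S) (hreg : Γ.IsRegularOfDegree d)
    (c : Fin k) : ∑ j, S c j = d := by
  obtain ⟨x, rfl⟩ := hf.1 c
  simp_rw [← hf.card_neighborFinset_filter x, ← hreg.degree_eq x,
    ← Γ.card_neighborFinset_eq_degree]
  exact_mod_cast (card_eq_sum_card_fiberwise fun _ _ => mem_univ _).symm

theorem isGreatest_eigenvalues [Nonempty V] {d : ℕ} (hf : IsPerfectColoring Γ f S)
    (hreg : Γ.IsRegularOfDegree d) :
    IsGreatest {x : ℝ | ∃ v ≠ 0, S.map (Int.cast : ℤ → ℝ) *ᵥ v = x • v} d := by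
  have hrow (c : Fin k) : ∑ j, S.map (Int.cast : ℤ → ℝ) c j = d := by
    simpa using congrArg (Int.cast : ℤ → ℝ) (hf.sum_row hreg c)
  refine ⟨⟨1, fun h => one_ne_zero (congrFun h (f (Classical.arbitrary V))), ?_⟩,
    fun x ⟨v, hv, h⟩ => le_of_mulVec_eq_smul_of_sum_row (fun c j => ?_) hrow hv h⟩
  · ext c
    simpa [mulVec, dotProduct] using hrow c
  · simpa using hf.nonneg c j

variable {R : Type*} [CommRing R]

theorem adjMatrix_mul_colorMatrix (hf : IsPerfectColoring Γ f S) :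
    Γ.adjMatrix R * colorMatrix R f = colorMatrix R f * S.map (Int.cast : ℤ → R) := by
  ext x c
  simp only [Matrix.mul_apply, colorMatrix, SimpleGraph.adjMatrix_apply, of_apply, map_apply,
    ite_mul, one_mul, zero_mul, ← ite_and, sum_ite_eq, mem_univ, if_true, sum_boole]
  rw [← hf.card_neighborFinset_filter x c]
  push_cast
  congr 2
  ext
  simp

theorem vecMul_colorMatrix_vecMul_eq_smul (hf : IsPerfectColoring Γ f S)
    {w : V → R} {θ : R} (hw : Γ.adjMatrix R *ᵥ w = θ • w) :
    w ᵥ* colorMatrix R f ᵥ* S.map (Int.cast : ℤ → R) = θ • (w ᵥ* colorMatrix R f) := by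
  rw [vecMul_vecMul, ← hf.adjMatrix_mul_colorMatrix, ← vecMul_vecMul,
    ← mulVec_transpose (Γ.adjMatrix R) w, SimpleGraph.transpose_adjMatrix, hw, smul_vecMul]

variable [DecidableEq V]

theorem adjMatrix_pow_mul_colorMatrix (hf : IsPerfectColoring Γ f S) (t : ℕ) :
    Γ.adjMatrix R ^ t * colorMatrix R f = colorMatrix R f * (S ^ t).map (Int.cast : ℤ → R) := by
  induction t with
  | zero => simp
  | succ t ih =>
    rw [pow_succ, Matrix.mul_assoc, hf.adjMatrix_mul_colorMatrix, ← Matrix.mul_assoc, ih,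
      Matrix.mul_assoc, pow_succ]
    exact congrArg _ (Matrix.map_mul (f := Int.castRingHom R)).symm

theorem sum_sum_adjMatrix_pow_apply (hf : IsPerfectColoring Γ f S) (t : ℕ) (i : Fin k) :
    ∑ x ∈ {x | f x = i}, ∑ y ∈ {y | f y = i}, (Γ.adjMatrix R ^ t) x y
      = #{x | f x = i} * ((S ^ t) i i : R) := by
  have h := congrFun₂ (hf.adjMatrix_pow_mul_colorMatrix (R := R) t)
  rw [← nsmul_eq_mul, ← sum_const]
  refine sum_congr rfl fun x hx => ?_
  rw [mem_filter] at hx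
  simpa [Matrix.mul_apply, colorMatrix, hx.2, sum_filter] using h x i

end IsPerfectColoring

end PerfectColoring

section Cayley

open ComplexConjugate

variable {G : Type*} [AddCommGroup G] {Γ : SimpleGraph G} {C : Finset G}

theorem neg_mem_of_forall_adj_iff (hΓ : ∀ x y, Γ.Adj x y ↔ x - y ∈ C) {s : G} (hs : s ∈ C) :
    -s ∈ C := by
  rw [← sub_zero s, ← hΓ] at hs
  rw [← zero_sub, ← hΓ]
  exact hs.symm

variable [Fintype G]

/-- Taking `re` loses nothing when `C = -C` (`ofReal_charEigenvalue`). -/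
noncomputable def charEigenvalue (C : Finset G) (ψ : AddChar G ℂ) : ℝ := (∑ s ∈ C, ψ s).re

theorem ofReal_charEigenvalue (hΓ : ∀ x y, Γ.Adj x y ↔ x - y ∈ C) (ψ : AddChar G ℂ) :
    (charEigenvalue C ψ : ℂ) = ∑ s ∈ C, ψ s := by
  refine Complex.conj_eq_iff_re.mp ?_
  simp_rw [map_sum, ← AddChar.map_neg_eq_conj]
  exact sum_nbij' Neg.neg Neg.neg (fun _ => neg_mem_of_forall_adj_iff hΓ)
    (fun _ => neg_mem_of_forall_adj_iff hΓ) (by simp) (by simp) (by simp)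

theorem eq_zero_of_charEigenvalue_eq_card (hgen : AddSubgroup.closure (C : Set G) = ⊤)
    {ψ : AddChar G ℂ} (h : charEigenvalue C ψ = #C) : ψ = 0 := by
  have hre : ∀ s ∈ C, (ψ s).re = 1 := by
    have hle : ∀ s ∈ C, (ψ s).re ≤ 1 := fun s _ =>
      (Complex.re_le_norm _).trans (AddChar.norm_apply ψ s).le
    rw [charEigenvalue, Complex.re_sum] at h
    exact (sum_eq_sum_iff_of_le hle).mp (by simpa using h)
  have hone : ∀ s ∈ C, ψ s = 1 := fun s hs => by
    have hnorm := Complex.normSq_eq_norm_sq (ψ s)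
    rw [AddChar.norm_apply, Complex.normSq_apply, hre s hs] at hnorm
    have him : (ψ s).im * (ψ s).im = 0 := by linarith
    exact Complex.ext (hre s hs) (by simpa using mul_self_eq_zero.mp him)
  ext x
  induction hgen ▸ AddSubgroup.mem_top x using AddSubgroup.closure_induction with
  | mem s hs => exact hone s hs
  | zero => simp
  | add x y _ _ hx hy => simp [AddChar.map_add_eq_mul, hx, hy]
  | neg x _ hx => simp [AddChar.map_neg_eq_inv, hx]

variable [DecidableEq G] [DecidableRel Γ.Adj]

theorem neighborFinset_eq_image_add (hΓ : ∀ x y, Γ.Adj x y ↔ x - y ∈ C) (x : G) :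
    Γ.neighborFinset x = C.image (x + ·) := by
  ext y
  rw [SimpleGraph.mem_neighborFinset, Γ.adj_comm, hΓ, mem_image]
  constructor
  · exact fun h => ⟨y - x, h, add_sub_cancel x y⟩
  · rintro ⟨s, hs, rfl⟩
    simpa using hs

theorem isRegularOfDegree_card (hΓ : ∀ x y, Γ.Adj x y ↔ x - y ∈ C) :
    Γ.IsRegularOfDegree #C := fun x => by
  rw [← Γ.card_neighborFinset_eq_degree, neighborFinset_eq_image_add hΓ,
    card_image_of_injective _ (add_right_injective x)]

theorem adjMatrix_mulVec_addChar (hΓ : ∀ x y, Γ.Adj x y ↔ x - y ∈ C) (ψ : AddChar G ℂ) :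
    Γ.adjMatrix ℂ *ᵥ ψ = (charEigenvalue C ψ : ℂ) • ⇑ψ := by
  ext x
  rw [SimpleGraph.adjMatrix_mulVec_apply, neighborFinset_eq_image_add hΓ,
    sum_image fun _ _ _ _ h => add_left_cancel h, ofReal_charEigenvalue hΓ, Pi.smul_apply,
    smul_eq_mul, sum_mul]
  simp [AddChar.map_add_eq_mul, mul_comm]

theorem adjMatrix_pow_mulVec_addChar (hΓ : ∀ x y, Γ.Adj x y ↔ x - y ∈ C) (ψ : AddChar G ℂ)
    (t : ℕ) : Γ.adjMatrix ℂ ^ t *ᵥ ψ = (charEigenvalue C ψ : ℂ) ^ t • ⇑ψ := by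
  induction t with
  | zero => simp
  | succ t ih =>
    rw [pow_succ', ← mulVec_mulVec, ih, mulVec_smul, adjMatrix_mulVec_addChar hΓ, smul_smul,
      pow_succ]

theorem card_mul_adjMatrix_pow_apply (hΓ : ∀ x y, Γ.Adj x y ↔ x - y ∈ C) (t : ℕ) (x y : G) :
    (Fintype.card G : ℂ) * (Γ.adjMatrix ℂ ^ t) x y
      = ∑ ψ : AddChar G ℂ, (charEigenvalue C ψ : ℂ) ^ t * ψ x * conj (ψ y) := by
  have hψ (ψ : AddChar G ℂ) :
      (charEigenvalue C ψ : ℂ) ^ t * ψ x = ∑ z, (Γ.adjMatrix ℂ ^ t) x z * ψ z := by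
    simpa [mulVec, dotProduct] using (congrFun (adjMatrix_pow_mulVec_addChar hΓ ψ t) x).symm
  simp_rw [hψ, sum_mul, mul_assoc, ← AddChar.map_neg_eq_conj, ← AddChar.map_add_eq_mul]
  rw [sum_comm]
  simp_rw [← mul_sum, AddChar.sum_apply_eq_ite, ← sub_eq_add_neg, sub_eq_zero, mul_ite, mul_zero,
    sum_ite_eq', mem_univ, if_true, mul_comm]

theorem sum_charEigenvalue_pow_mul_normSq (hΓ : ∀ x y, Γ.Adj x y ↔ x - y ∈ C) (F : Finset G)
    (t : ℕ) :
    ∑ ψ : AddChar G ℂ, ((charEigenvalue C ψ ^ t * Complex.normSq (∑ x ∈ F, ψ x) : ℝ) : ℂ)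
      = Fintype.card G * ∑ x ∈ F, ∑ y ∈ F, (Γ.adjMatrix ℂ ^ t) x y := by
  simp_rw [Complex.ofReal_mul, Complex.ofReal_pow, ← Complex.mul_conj, map_sum, sum_mul_sum,
    mul_sum, card_mul_adjMatrix_pow_apply hΓ]
  rw [sum_comm]
  refine sum_congr rfl fun x _ => ?_
  rw [sum_comm]
  simp_rw [mul_assoc]

end Cayley

section ExponentFour

variable {G : Type*} [AddCommGroup G]

variable (h4 : ∀ x : G, 4 • x = 0)
include h4

theorem AddChar.apply_mem_range_toComplex (ψ : AddChar G ℂ) (x : G) :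
    ψ x ∈ GaussianInt.toComplex.range := by
  have hpow : ψ x ^ 4 = 1 := by rw [← AddChar.map_nsmul_eq_pow, h4, AddChar.map_zero_eq_one]
  have hroots : (ψ x - 1) * (ψ x + 1) * (ψ x - Complex.I) * (ψ x + Complex.I) = 0 := by
    linear_combination hpow - (ψ x ^ 2 - 1) * Complex.I_sq
  simp only [mul_eq_zero, sub_eq_zero, add_eq_zero_iff_eq_neg] at hroots
  rcases hroots with ((h | h) | h) | h <;> rw [h]
  · exact ⟨⟨1, 0⟩, by simp [GaussianInt.toComplex_def']⟩
  · exact ⟨⟨-1, 0⟩, by simp [GaussianInt.toComplex_def']⟩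
  · exact ⟨⟨0, 1⟩, by simp [GaussianInt.toComplex_def']⟩
  · exact ⟨⟨0, -1⟩, by simp [GaussianInt.toComplex_def']⟩

theorem exists_normSq_sum_addChar_eq_natCast (ψ : AddChar G ℂ) (F : Finset G) :
    ∃ r : ℕ, Complex.normSq (∑ x ∈ F, ψ x) = r := by
  obtain ⟨z, hz⟩ := Subring.sum_mem _ fun x _ => AddChar.apply_mem_range_toComplex h4 ψ x
  refine ⟨z.norm.natAbs, ?_⟩
  rw [← hz, ← GaussianInt.intCast_real_norm, GaussianInt.natCast_natAbs_norm]

end ExponentFour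

section SpectralWeight

variable {G : Type*} [AddCommGroup G] [Fintype G]

/-- The coefficient `a_j` of the theorem for `μ = λ_j`, with `F` the colour class. -/
noncomputable def spectralWeight (C F : Finset G) (μ : ℝ) : ℝ :=
  (∑ ψ ∈ univ.erase (0 : AddChar G ℂ) with charEigenvalue C ψ = μ,
    Complex.normSq (∑ x ∈ F, ψ x)) / Fintype.card G

theorem exists_card_mul_spectralWeight_eq_natCast (h4 : ∀ x : G, 4 • x = 0) (C F : Finset G)
    (μ : ℝ) : ∃ r : ℕ, (Fintype.card G : ℝ) * spectralWeight C F μ = r := by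
  choose r hr using fun ψ => exists_normSq_sum_addChar_eq_natCast h4 ψ F
  refine ⟨∑ ψ ∈ univ.erase (0 : AddChar G ℂ) with charEigenvalue C ψ = μ, r ψ, ?_⟩
  rw [spectralWeight, mul_div_cancel₀ _ (by positivity)]
  push_cast
  exact sum_congr rfl fun ψ _ => hr ψ

end SpectralWeight

section CayleyColoring

variable {G : Type*} [AddCommGroup G] [Fintype G] [DecidableEq G] {Γ : SimpleGraph G}
  [DecidableRel Γ.Adj] {C : Finset G} {k : ℕ} {f : G → Fin k} {S : Matrix (Fin k) (Fin k) ℤ}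

namespace IsPerfectColoring

theorem sum_charEigenvalue_pow_mul_normSq_color (hΓ : ∀ x y, Γ.Adj x y ↔ x - y ∈ C)
    (hf : IsPerfectColoring Γ f S) (t : ℕ) (i : Fin k) :
    ∑ ψ : AddChar G ℂ, charEigenvalue C ψ ^ t * Complex.normSq (∑ x ∈ {x | f x = i}, ψ x)
      = Fintype.card G * (#{x | f x = i} * ((S ^ t) i i : ℝ)) := by
  have h := sum_charEigenvalue_pow_mul_normSq hΓ {x | f x = i} t
  rw [hf.sum_sum_adjMatrix_pow_apply] at h
  exact_mod_cast h

theorem exists_mulVec_eq_charEigenvalue_smul (hΓ : ∀ x y, Γ.Adj x y ↔ x - y ∈ C)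
    (hf : IsPerfectColoring Γ f S) {ψ : AddChar G ℂ} {i : Fin k}
    (hψ : ∑ x ∈ {x | f x = i}, ψ x ≠ 0) :
    ∃ v ≠ 0, S.map (Int.cast : ℤ → ℝ) *ᵥ v = charEigenvalue C ψ • v := by
  refine exists_mulVec_eq_smul_of_vecMul_eq_smul (w := ⇑ψ ᵥ* colorMatrix ℂ f) (fun h => hψ ?_) ?_
  · simpa [vecMul, dotProduct, colorMatrix, sum_filter] using congrFun h i
  · rw [Matrix.map_map]
    exact hf.vecMul_colorMatrix_vecMul_eq_smul (adjMatrix_mulVec_addChar hΓ ψ)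

theorem sum_pow_mul_spectralWeight (hΓ : ∀ x y, Γ.Adj x y ↔ x - y ∈ C)
    (hgen : AddSubgroup.closure (C : Set G) = ⊤) (hf : IsPerfectColoring Γ f S) {l : ℕ}
    {L : Fin (l + 1) → ℝ} (hmono : StrictAnti L)
    (heig : ∀ x : ℝ,
      (∃ v : Fin k → ℝ, v ≠ 0 ∧ (S.map ((↑) : ℤ → ℝ)).mulVec v = x • v) ↔ ∃ j, L j = x)
    (i : Fin k) (t : ℕ) :
    ∑ j : Fin l, L j.succ ^ t * spectralWeight C {x | f x = i} (L j.succ)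
      = #{x | f x = i} * ((S ^ t) i i : ℝ)
        - ((#{x | f x = i} : ℝ) ^ 2 / Fintype.card G) * L 0 ^ t := by
  have hL0 : L 0 = #C := by
    have hmax := hf.isGreatest_eigenvalues (isRegularOfDegree_card hΓ)
    rw [show {x : ℝ | _} = Set.range L from Set.ext heig] at hmax
    exact (hmax.unique ⟨⟨0, rfl⟩,
      Set.forall_mem_range.2 fun j => hmono.antitone (Fin.zero_le j)⟩).symm
  have hsupp : ∀ ψ ∈ univ.erase (0 : AddChar G ℂ),
      Complex.normSq (∑ x ∈ {x | f x = i}, ψ x) ≠ 0 →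
        ∃ j : Fin l, charEigenvalue C ψ = L j.succ := by
    intro ψ hψ hW
    obtain ⟨j, hj⟩ := (heig _).mp
      (hf.exists_mulVec_eq_charEigenvalue_smul hΓ fun h => hW (by rw [h, map_zero]))
    cases j using Fin.cases with
    | zero =>
      exact absurd (eq_zero_of_charEigenvalue_eq_card hgen (hj ▸ hL0)) (ne_of_mem_erase hψ)
    | succ j => exact ⟨j, hj.symm⟩
  have hspec := hf.sum_charEigenvalue_pow_mul_normSq_color hΓ t i
  rw [← add_sum_erase _ _ (mem_univ 0), sum_comp_mul_eq_sum_fiberwise _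
    (hmono.injective.comp (Fin.succ_injective _)) hsupp (· ^ t)] at hspec
  have h0 : charEigenvalue C 0 = #C := by simp [charEigenvalue]
  simp only [h0, ← hL0, AddChar.zero_apply, sum_const, nsmul_eq_mul, mul_one,
    Complex.normSq_natCast, Function.comp_apply] at hspec
  simp only [spectralWeight, mul_div_assoc', ← sum_div]
  field_simp
  linarith

end IsPerfectColoring

end CayleyColoring

section Doob

variable {m n : ℕ}

open scoped Classical in
noncomputable def doobConn (m n : ℕ) : Finset (DoobV m n) := {v | (doobGraph m n).Adj v 0}

theorem mem_doobConn {v : DoobV m n} : v ∈ doobConn m n ↔ (doobGraph m n).Adj v 0 := by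
  simp [doobConn]

theorem doobGraph_adj_add_right {x y : DoobV m n} (z : DoobV m n) :
    (doobGraph m n).Adj (x + z) (y + z) ↔ (doobGraph m n).Adj x y := by
  simp [doobGraph, add_sub_add_right_eq_sub]

theorem doobGraph_adj_iff_sub_mem (x y : DoobV m n) :
    (doobGraph m n).Adj x y ↔ x - y ∈ doobConn m n := by
  rw [mem_doobConn, ← doobGraph_adj_add_right (x := x - y) (y := 0) y, sub_add_cancel, zero_add]

theorem inl_single_mem_doobConn (i : Fin m) {a : ZMod 4 × ZMod 4} (ha : a ∈ shrikhandeSet) :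
    ((Pi.single i a, 0) : DoobV m n) ∈ doobConn m n := by
  have ha0 : a ≠ 0 := by
    rintro rfl
    rcases ha with h | h | h | h | h | h <;> exact absurd h (by decide)
  rw [mem_doobConn, doobGraph, SimpleGraph.fromRel_adj]
  refine ⟨by simpa using ha0, Or.inl (Or.inl ⟨i, by simpa using ha, fun j hj => ?_, rfl⟩)⟩
  simp [hj]

theorem inr_single_mem_doobConn (i : Fin n) {b : ZMod 4} (hb : b ≠ 0) :
    ((0, Pi.single i b) : DoobV m n) ∈ doobConn m n := by
  rw [mem_doobConn, doobGraph, SimpleGraph.fromRel_adj]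
  refine ⟨by simpa using hb, Or.inl (Or.inr ⟨i, by simpa using hb, fun j hj => ?_, rfl⟩)⟩
  simp [hj]

theorem closure_doobConn : AddSubgroup.closure (doobConn m n : Set (DoobV m n)) = ⊤ := by
  set H := AddSubgroup.closure (doobConn m n : Set (DoobV m n))
  have hfst (i : Fin m) (a : ZMod 4 × ZMod 4) : ((Pi.single i a, 0) : DoobV m n) ∈ H := by
    have ha : a = a.1.val • ((1, 0) : ZMod 4 × ZMod 4) + a.2.val • (0, 1) := by
      ext <;> simp
    have hφ : ((Pi.single i a, 0) : DoobV m n)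
        = ((AddMonoidHom.inl _ _).comp (AddMonoidHom.single _ i)) a := rfl
    rw [hφ, ha, map_add, map_nsmul, map_nsmul]
    simp only [AddMonoidHom.comp_apply, AddMonoidHom.inl_apply, AddMonoidHom.single_apply]
    have h10 := inl_single_mem_doobConn (n := n) i (a := (1, 0)) (by simp [shrikhandeSet])
    have h01 := inl_single_mem_doobConn (n := n) i (a := (0, 1)) (by simp [shrikhandeSet])
    exact add_mem (nsmul_mem (AddSubgroup.subset_closure h10) _)
      (nsmul_mem (AddSubgroup.subset_closure h01) _)
  have hsnd (i : Fin n) (b : ZMod 4) : ((0, Pi.single i b) : DoobV m n) ∈ H := by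
    have hφ : ((0, Pi.single i b) : DoobV m n)
        = ((AddMonoidHom.inr _ _).comp (AddMonoidHom.single _ i)) b := rfl
    rw [hφ, ← ZMod.natCast_zmod_val b, ← nsmul_one, map_nsmul]
    simp only [AddMonoidHom.comp_apply, AddMonoidHom.inr_apply, AddMonoidHom.single_apply]
    have h1 := inr_single_mem_doobConn (m := m) i (by decide : (1 : ZMod 4) ≠ 0)
    exact nsmul_mem (AddSubgroup.subset_closure h1) _
  refine eq_top_iff.mpr fun x _ => ?_
  have hx : x =
      ∑ i, ((Pi.single i (x.1 i), 0) : DoobV m n) + ∑ i, (0, Pi.single i (x.2 i)) := by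
    ext <;> simp [Prod.fst_sum, Prod.snd_sum, Finset.univ_sum_single]
  rw [hx]
  exact add_mem (sum_mem fun i _ => hfst i _) (sum_mem fun i _ => hsnd i _)

theorem four_nsmul_doobV (x : DoobV m n) : 4 • x = 0 := by
  ext <;> simp [show (4 : ZMod 4) = 0 from rfl]

theorem card_doobV : Fintype.card (DoobV m n) = 4 ^ (2 * m + n) := by
  simp [Fintype.card_prod, ZMod.card, pow_add, pow_mul]

end Doob

/-- Theorem 1 for `D(m,n)` (Statement 4): for a perfect coloring `f` of `D(m,n)`
(with `D(0,n) = H(n,4)`) with quotient matrix `S` whose distinct eigenvalues are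
`L 0 > L 1 > … > L l`, and any color `i`, the Vandermonde system has a unique solution
`(a 0, …, a (l-1))` (indexed so that `a j` corresponds to the eigenvalue `L (j+1)`),
and `4^(2m+n) * a j` is a non-negative integer for every `j`. -/
theorem statement4 (m n : ℕ) {k l : ℕ} (f : DoobV m n → Fin k)
    (S : Matrix (Fin k) (Fin k) ℤ)
    (hf : IsPerfectColoring (doobGraph m n) f S)
    (L : Fin (l + 1) → ℝ) (hmono : StrictAnti L)
    (heig : ∀ x : ℝ,
      (∃ v : Fin k → ℝ, v ≠ 0 ∧ (S.map ((↑) : ℤ → ℝ)).mulVec v = x • v) ↔ ∃ j, L j = x)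
    (i : Fin k) :
    ∃ a : Fin l → ℝ,
      (∀ t : ℕ, t < l →
        ∑ j : Fin l, (L j.succ) ^ t * a j
          = ((f ⁻¹' {i}).ncard : ℝ) * (((S ^ t) i i : ℤ) : ℝ)
            - (((f ⁻¹' {i}).ncard : ℝ) ^ 2 / 4 ^ (2 * m + n)) * (L 0) ^ t) ∧
      (∀ b : Fin l → ℝ,
        (∀ t : ℕ, t < l →
          ∑ j : Fin l, (L j.succ) ^ t * b j
            = ((f ⁻¹' {i}).ncard : ℝ) * (((S ^ t) i i : ℤ) : ℝ)
              - (((f ⁻¹' {i}).ncard : ℝ) ^ 2 / 4 ^ (2 * m + n)) * (L 0) ^ t) → b = a) ∧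
      (∀ j : Fin l, ∃ r : ℕ, (4 ^ (2 * m + n) : ℝ) * a j = r) := by
  classical
  have hcard : (4 ^ (2 * m + n) : ℝ) = Fintype.card (DoobV m n) := by
    exact_mod_cast card_doobV.symm
  have hcolor : ((f ⁻¹' {i}).ncard : ℝ) = #{x | f x = i} := by
    rw [← Set.ncard_coe_finset]
    congr
    ext
    simp
  have hsol :=
    hf.sum_pow_mul_spectralWeight doobGraph_adj_iff_sub_mem closure_doobConn hmono heig i
  rw [hcard, hcolor]
  refine ⟨fun j => spectralWeight (doobConn m n) {x | f x = i} (L j.succ), fun t _ => hsol t,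
    fun b hb => ?_, fun j => exists_card_mul_spectralWeight_eq_natCast four_nsmul_doobV _ _ _⟩
  exact eq_of_forall_sum_pow_mul_eq (hmono.injective.comp (Fin.succ_injective _))
    fun t ht => (hb t ht).trans (hsol t).symm
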